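/- For every integer n ≥ 2, the terminating hypergeometric sum ₃F₂(1-n, 2-n, n-1; -n, -n; 1/2) = Σ_k ((1-n)_k (2-n)_k (n-1)_k)/((-n)_k (-n)_k k!) · (1/2)^k equals (2^(n-1)/n²) · (-1 + (2n-1)!!/(2^(n-2) (n-1)!)). -/

import Mathlib

/-!
Put `n = m + 2`. At negative integers the Pochhammer symbols are signed descending factorials,
and `(N+1-k) (N+1).descFactorial k = (N+1) N.descFactorial k` turns the `k`-th term into
`(m+1-k)(m+2-k)^2 C(m+k,k) 2^(-k) / ((m+1)(m+2)^2)`. The cubic plus `2(m+1)` is Gosper-summable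
against `C(m+k,k) 2^(-k)`, and the correction is `2(m+1) ∑ₖ C(m+k,k) 2^(-k) = 2(m+1) 2^m`, which
follows from Pascal's rule. The value at the top of the telescoping sum involves
`C(2m+1,m+1) (m+1)! = 2^m (2m+1)‼`.
-/

/-- Plane binary trees with ℕ-labeled leaves. -/
inductive BTree : Type
  | leaf : ℕ → BTree
  | node : BTree → BTree → BTree

namespace BTree

/-- Multiset of leaf labels. -/
def leaves : BTree → Multiset ℕ
  | leaf i => {i}
  | node l r => leaves l + leaves r

/-- Depth of the leaf labeled `i` (junk if `i` is not a leaf label). -/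
def dep : BTree → ℕ → ℕ
  | leaf _, _ => 0
  | node l r, i => if i ∈ leaves l then dep l i + 1 else dep r i + 1

/-- Path length (number of edges) between the leaves labeled `i` and `j`. -/
def dist : BTree → ℕ → ℕ → ℕ
  | leaf _, _, _ => 0
  | node l r, i, j =>
    if i ∈ leaves l ∧ j ∈ leaves l then dist l i j
    else if i ∈ leaves r ∧ j ∈ leaves r then dist r i j
    else (if i ∈ leaves l then dep l i + 1 else dep r i + 1)
       + (if j ∈ leaves l then dep l j + 1 else dep r j + 1)

/-- Isomorphism of leaf-labeled binary trees: generated by swapping the two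
children of any node, preserving leaf labels. -/
inductive Iso : BTree → BTree → Prop
  | leaf (i : ℕ) : Iso (leaf i) (leaf i)
  | node {l r l' r'} : Iso l l' → Iso r r' → Iso (node l r) (node l' r')
  | swap {l r l' r'} : Iso l r' → Iso r l' → Iso (node l r) (node l' r')

end BTree

/-- A valid fully resolved rooted phylogenetic tree on the leaf set {1,…,n}:
the multiset of leaf labels is exactly {1,…,n} (each label occurring once). -/
def BTree.valid (n : ℕ) (t : BTree) : Prop := t.leaves = (Finset.Icc 1 n).val

/-- The type of fully resolved rooted phylogenetic trees on {1,…,n}, up to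
label-preserving isomorphism. -/
def PhyloTree (n : ℕ) : Type :=
  Quot (fun a b : {t : BTree // t.valid n} => BTree.Iso a.1 b.1)

/-- The path length between leaves `i` and `j` of a phylogenetic tree,
computed on a representative. -/
noncomputable def pdist {n : ℕ} (T : PhyloTree n) (i j : ℕ) : ℕ :=
  BTree.dist T.out.1 i j

/-- Double factorial: `df n = n‼`. -/
def df : ℕ → ℕ
  | 0 => 1
  | 1 => 1
  | n + 2 => (n + 2) * df n

/-- Rising factorial (Pochhammer symbol) `(a)_k = a(a+1)⋯(a+k-1)`. -/
def rf (a : ℝ) : ℕ → ℝ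
  | 0 => 1
  | k + 1 => rf a k * (a + k)

open Nat

theorem df_eq_doubleFactorial : ∀ n, df n = n‼
  | 0 => rfl
  | 1 => rfl
  | n + 2 => by rw [df, doubleFactorial_add_two, df_eq_doubleFactorial n]

theorem rf_eq_eval_ascPochhammer (a : ℝ) : ∀ k, rf a k = (ascPochhammer ℝ k).eval a
  | 0 => by simp [rf]
  | k + 1 => by rw [rf, ascPochhammer_succ_eval, rf_eq_eval_ascPochhammer a k]

theorem rf_neg_natCast (N k : ℕ) : rf (-N) k = (-1) ^ k * N.descFactorial k := by
  rw [rf_eq_eval_ascPochhammer, ascPochhammer_eval_neg_eq_descPochhammer,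
    descPochhammer_eval_eq_descFactorial]

theorem rf_natCast_add_one (N k : ℕ) : rf (N + 1) k = k ! * (N + k).choose k := by
  rw [rf_eq_eval_ascPochhammer, ← Nat.cast_succ, ascPochhammer_nat_eq_natCast_ascFactorial,
    ascFactorial_eq_factorial_mul_choose, Nat.cast_mul]

theorem natCast_succ_sub_mul_descFactorial {R : Type*} [Ring R] (n k : ℕ) :
    ((n : R) + 1 - k) * (n + 1).descFactorial k = (n + 1) * n.descFactorial k := by
  rcases le_or_gt k (n + 1) with hk | hk
  · have := congrArg (Nat.cast (R := R)) (succ_descFactorial n k)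
    push_cast [Nat.cast_sub hk] at this
    exact this
  · rw [descFactorial_eq_zero_iff_lt.mpr hk, descFactorial_eq_zero_iff_lt.mpr (by omega)]
    simp

theorem choose_mul_factorial_eq_two_pow_mul_doubleFactorial (m : ℕ) :
    (2 * m + 1).choose (m + 1) * (m + 1)! = 2 ^ m * (2 * m + 1)‼ := by
  have h := choose_mul_factorial_mul_factorial (show m + 1 ≤ 2 * m + 1 by omega)
  rw [show 2 * m + 1 - (m + 1) = m by omega, factorial_eq_mul_doubleFactorial (2 * m),
    doubleFactorial_two_mul] at h
  apply Nat.eq_of_mul_eq_mul_right (factorial_pos m)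
  rw [h]; ring

theorem sum_range_choose_div_two_pow (m : ℕ) :
    ∑ k ∈ Finset.range (m + 1), ((m + k).choose k : ℝ) / 2 ^ k = 2 ^ m := by
  induction m with
  | zero => simp
  | succ m ih =>
    set a : ℕ → ℕ → ℝ := fun m k => ((m + k).choose k : ℝ) / 2 ^ k with ha
    change ∑ k ∈ Finset.range (m + 1), a m k = 2 ^ m at ih
    change ∑ k ∈ Finset.range (m + 2), a (m + 1) k = 2 ^ (m + 1)
    have pascal : ∀ k, a (m + 1) (k + 1) = a m (k + 1) + a (m + 1) k / 2 := by
      intro k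
      simp only [ha]
      rw [show m + 1 + (k + 1) = (m + 1 + k) + 1 by ring, choose_succ_succ', pow_succ,
        show m + 1 + k = m + (k + 1) by ring]
      push_cast
      ring
    have diag : a (m + 1) (m + 1) = 2 * a m (m + 1) := by
      simp only [ha]
      rw [show m + 1 + (m + 1) = (2 * m + 1) + 1 by ring, choose_succ_succ', ← choose_symm_half,
        show m + (m + 1) = 2 * m + 1 by ring]
      push_cast
      ring
    have hzero : ∀ m, a m 0 = 1 := by simp [ha]
    have split : ∑ k ∈ Finset.range (m + 2), a (m + 1) k
        = 1 + ∑ k ∈ Finset.range (m + 1), a m (k + 1)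
          + (∑ k ∈ Finset.range (m + 1), a (m + 1) k) / 2 := by
      rw [Finset.sum_range_succ', hzero, Finset.sum_congr rfl (fun k _ => pascal k),
        Finset.sum_add_distrib, Finset.sum_div]
      ring
    have shift := Finset.sum_range_succ' (a m) (m + 1)
    rw [Finset.sum_range_succ, ih, hzero] at shift
    rw [Finset.sum_range_succ (a (m + 1)), diag] at split ⊢
    rw [pow_succ]
    linarith

theorem choose_succ_div_two_pow_succ (m k : ℕ) :
    ((m + (k + 1)).choose (k + 1) : ℝ) / 2 ^ (k + 1)
      = ((m + k).choose k : ℝ) / 2 ^ k * ((m + k + 1) / (2 * (k + 1))) := by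
  have h := congrArg (Nat.cast (R := ℝ)) (add_one_mul_choose_eq (m + k) k)
  push_cast at h
  rw [← add_assoc]
  field_simp
  linear_combination -(2 : ℝ) ^ (k + 1) * h

/-- The rational certificate of Gosper's algorithm: `C(m+k,k)/2^k * ((m+1-k)(m+2-k)^2 + 2(m+1))`
is the forward difference in `k` of `C(m+k,k)/2^k * gosperCert m k`. -/
def gosperCert (m : ℕ) (x : ℝ) : ℝ := 2 * x * (x ^ 2 - (2 * m + 2) * x + m ^ 2 + 6 * m + 7)

theorem sum_range_choose_div_two_pow_mul_cubic (m : ℕ) :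
    ∑ k ∈ Finset.range (m + 1),
        ((m : ℝ) + 1 - k) * ((m : ℝ) + 2 - k) ^ 2 * (((m + k).choose k : ℝ) / 2 ^ k)
      = 4 * (m + 1) * (2 * m + 3) * ((2 * m + 1).choose (m + 1) : ℝ) / 2 ^ (m + 1)
        - 2 * (m + 1) * 2 ^ m := by
  set u : ℕ → ℝ := fun k => ((m + k).choose k : ℝ) / 2 ^ k with hu
  have step : ∀ k : ℕ, u (k + 1) * gosperCert m ↑(k + 1) - u k * gosperCert m k
      = ((m : ℝ) + 1 - k) * ((m : ℝ) + 2 - k) ^ 2 * u k + 2 * (m + 1) * u k := by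
    intro k
    simp only [hu, choose_succ_div_two_pow_succ, gosperCert, Nat.cast_succ]
    field_simp
    ring
  have telescope := Finset.sum_range_sub (fun k => u k * gosperCert m k) (m + 1)
  beta_reduce at telescope
  simp only [step, Finset.sum_add_distrib, ← Finset.mul_sum] at telescope
  rw [sum_range_choose_div_two_pow] at telescope
  have top : u (m + 1) * gosperCert m ↑(m + 1)
      = 4 * (m + 1) * (2 * m + 3) * ((2 * m + 1).choose (m + 1) : ℝ) / 2 ^ (m + 1) := by
    simp only [hu, gosperCert, show m + (m + 1) = 2 * m + 1 by ring]
    push_cast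
    ring
  have bottom : gosperCert m ((0 : ℕ) : ℝ) = 0 := by simp [gosperCert]
  rw [top, bottom, mul_zero, sub_zero, ← eq_sub_iff_add_eq] at telescope
  exact telescope

theorem hypergeometric_term_eq (m k : ℕ) (hk : k ≤ m + 2) :
    rf (1 - ((m + 2 : ℕ) : ℝ)) k * rf (2 - ((m + 2 : ℕ) : ℝ)) k * rf (((m + 2 : ℕ) : ℝ) - 1) k /
        (rf (-((m + 2 : ℕ) : ℝ)) k * rf (-((m + 2 : ℕ) : ℝ)) k * (k ! : ℝ)) * (1 / 2) ^ k
      = ((m : ℝ) + 1 - k) * ((m : ℝ) + 2 - k) ^ 2 * (((m + k).choose k : ℝ) / 2 ^ k)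
        / ((m + 1) * (m + 2) ^ 2) := by
  rw [show 1 - ((m + 2 : ℕ) : ℝ) = -((m + 1 : ℕ) : ℝ) by push_cast; ring,
    show 2 - ((m + 2 : ℕ) : ℝ) = -(m : ℝ) by push_cast; ring,
    show ((m + 2 : ℕ) : ℝ) - 1 = m + 1 by push_cast; ring,
    rf_neg_natCast, rf_neg_natCast, rf_neg_natCast, rf_natCast_add_one]
  have d1 := natCast_succ_sub_mul_descFactorial (R := ℝ) (m + 1) k
  rw [show m + 1 + 1 = m + 2 by ring] at d1
  have d0 := natCast_succ_sub_mul_descFactorial (R := ℝ) m k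
  have hD : ((m + 2).descFactorial k : ℝ) ≠ 0 := by
    exact_mod_cast (descFactorial_pos.mpr hk).ne'
  have hF : (k ! : ℝ) ≠ 0 := by positivity
  push_cast at d1 d0 hD ⊢
  rw [one_div, inv_pow]
  field_simp
  linear_combination ((m + k).choose k : ℝ) * (-((m + 1).descFactorial k : ℝ) * ((m : ℝ) + 2) ^ 2 * d0
    - ((m : ℝ) + 1 - k) * (((m : ℝ) + 2 - k) * (m + 2).descFactorial k
      + ((m : ℝ) + 2) * (m + 1).descFactorial k) * d1)

/-- the terminating hypergeometric evaluation
₃F₂(1-n, 2-n, n-1; -n, -n; 1/2)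
  = (2^(n-1)/n²)·(-1 + (2n-1)‼/(2^(n-2)(n-1)!)). -/
theorem stmt3 (n : ℕ) (hn : 2 ≤ n) :
    ∑ k ∈ Finset.range (n - 1),
        rf (1 - (n : ℝ)) k * rf (2 - (n : ℝ)) k * rf ((n : ℝ) - 1) k /
          (rf (-(n : ℝ)) k * rf (-(n : ℝ)) k * (Nat.factorial k : ℝ)) *
          (1 / 2) ^ k
      = 2 ^ (n - 1) / (n : ℝ) ^ 2 *
          (-1 + (df (2 * n - 1) : ℝ) /
            (2 ^ (n - 2) * (Nat.factorial (n - 1) : ℝ))) := by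
  obtain ⟨m, rfl⟩ : ∃ m, n = m + 2 := ⟨n - 2, by omega⟩
  rw [show m + 2 - 1 = m + 1 by omega, show m + 2 - 2 = m by omega,
    show 2 * (m + 2) - 1 = 2 * m + 1 + 2 by omega, df_eq_doubleFactorial,
    doubleFactorial_add_two,
    Finset.sum_congr rfl (fun k hk => hypergeometric_term_eq m k (by rw [Finset.mem_range] at hk; omega)),
    ← Finset.sum_div, sum_range_choose_div_two_pow_mul_cubic]
  have hC := congrArg (Nat.cast (R := ℝ)) (choose_mul_factorial_eq_two_pow_mul_doubleFactorial m)
  push_cast at hC ⊢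
  field_simp
  linear_combination 4 * (2 : ℝ) ^ m * (2 * m + 3) * hC
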